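/- arXiv:1306.5710 — 2 statements merged into one kernel-verified Lean document; each statement's English description precedes it below -/
import Mathlib

section
/- If R is a domain and every cyclically presented right R-module has a projective cover, then R is a local ring. -/
open Submodule LinearMap Function

/-- `M` has a projective cover: an epimorphism `p : P → M` with `P` projective and
`ker p` superfluous (small) in `P`. -/
def HasProjectiveCover (S : Type u) [Ring S] (M : Type v) [AddCommGroup M]
    [Module S M] : Prop :=
  ∃ (P : Type u) (_ : AddCommGroup P) (_ : Module S P) (p : P →ₗ[S] M),
    Module.Projective S P ∧ Function.Surjective p ∧
    ∀ L : Submodule S P, LinearMap.ker p ⊔ L = ⊤ → L = ⊤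

/-! Lift the projection `R → R/aR` through a projective cover `p : P → R/aR`. Because `ker p`
is superfluous the lift `g : R → P` is onto, so it splits, and the idempotent `s ∘ g` of
`End(R_R) ≅ R` is `0` or `1` since `R` is a domain. If it is `0` then `P = 0`, so `aR = R`; if it
is `1` then `g` is an isomorphism carrying `aR = ker (p ∘ g)` onto `ker p`, so `aR` is superfluous
in `R` and `aR + bR = R` forces `bR = R` whenever `a + b = 1`. A one-sided inverse in a domain is
two-sided, so `a` or `b` is a unit. -/

namespace Submodule

variable {S P Q : Type*} [Ring S] [AddCommGroup P] [Module S P] [AddCommGroup Q] [Module S Q]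

def IsSuperfluous (N : Submodule S P) : Prop :=
  ∀ L : Submodule S P, N ⊔ L = ⊤ → L = ⊤

theorem IsSuperfluous.comap_of_bijective {N : Submodule S P} (hN : N.IsSuperfluous)
    {f : Q →ₗ[S] P} (hf : Bijective f) : (N.comap f).IsSuperfluous := by
  intro L hL
  have hNL : N ⊔ L.map f = ⊤ := by
    rw [← map_comap_eq_of_surjective hf.2 N, ← map_sup, hL, map_top, range_eq_top.2 hf.2]
  rw [← comap_map_eq_of_injective hf.1 L, hN _ hNL, comap_top]

end Submodule

theorem LinearMap.surjective_of_surjective_comp_of_isSuperfluous_ker {S P Q M : Type*} [Ring S]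
    [AddCommGroup P] [Module S P] [AddCommGroup Q] [Module S Q] [AddCommGroup M] [Module S M]
    {p : P →ₗ[S] M} (hp : (ker p).IsSuperfluous) {g : Q →ₗ[S] P} (hpg : Surjective (p ∘ₗ g)) :
    Surjective g := by
  refine range_eq_top.1 (hp _ ?_)
  rw [sup_comm, ← comap_map_eq, ← range_comp, range_eq_top.2 hpg, comap_top]

section RegularRightModule

variable {R : Type*} [Ring R]

instance : Module.Projective Rᵐᵒᵖ R :=
  .of_equiv (MulOpposite.opLinearEquiv Rᵐᵒᵖ).symm

theorem isUnit_of_span_singleton_eq_top [IsDedekindFiniteMonoid R] {a : R}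
    (ha : span Rᵐᵒᵖ {a} = ⊤) : IsUnit a := by
  obtain ⟨c, hc⟩ := mem_span_singleton.1 (ha ▸ mem_top : (1 : R) ∈ span Rᵐᵒᵖ {a})
  exact IsUnit.of_mul_eq_one c.unop hc

theorem span_singleton_sup_span_singleton_eq_top {a b : R} (hab : a + b = 1) :
    span Rᵐᵒᵖ {a} ⊔ span Rᵐᵒᵖ {b} = ⊤ := eq_top_iff.2 fun x _ => by
  rw [← one_mul x, ← hab, add_mul]
  exact add_mem_sup (mem_span_singleton.2 ⟨.op x, rfl⟩) (mem_span_singleton.2 ⟨.op x, rfl⟩)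

theorem LinearMap.subsingleton_or_injective_of_surjective [IsLeftCancelMulZero R] {P : Type*}
    [AddCommGroup P] [Module Rᵐᵒᵖ P] [Module.Projective Rᵐᵒᵖ P] {g : R →ₗ[Rᵐᵒᵖ] P}
    (hg : Surjective g) : Subsingleton P ∨ Injective g := by
  obtain ⟨s, hs⟩ := Module.projective_lifting_property g LinearMap.id hg
  have hgs (x : P) : g (s x) = x := LinearMap.congr_fun hs x
  have hidem : IsIdempotentElem (s ∘ₗ g) := LinearMap.ext fun r => congrArg s (hgs (g r))
  let φ := RingEquiv.moduleEndSelfOp R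
  rcases IsIdempotentElem.iff_eq_zero_or_one.1 (hidem.map φ.symm) with h0 | h1
  · have hsg : s ∘ₗ g = 0 := by simpa only [φ.apply_symm_apply, map_zero] using congrArg φ h0
    refine .inl (subsingleton_of_forall_eq 0 fun x => ?_)
    calc x = g ((s ∘ₗ g) (s x)) := by rw [LinearMap.comp_apply, hgs, hgs]
      _ = 0 := by rw [hsg, LinearMap.zero_apply, map_zero]
  · have hsg : s ∘ₗ g = 1 := by simpa only [φ.apply_symm_apply, map_one] using congrArg φ h1
    exact .inr (LeftInverse.injective (g := s) (LinearMap.congr_fun hsg))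

end RegularRightModule

/-- If `R` is a domain and every cyclically presented right `R`-module has a projective
cover, then `R` is local. -/
theorem stmt_14 {R : Type u} [Ring R] [IsDomain R]
    (h : ∀ x : R, HasProjectiveCover Rᵐᵒᵖ (R ⧸ Submodule.span Rᵐᵒᵖ {x})) :
    IsLocalRing R := by
  refine ⟨fun {a b} hab => ?_⟩
  obtain ⟨P, _, _, p, _, hp, hsmall⟩ := h a
  obtain ⟨g, hpg⟩ := Module.projective_lifting_property p (span Rᵐᵒᵖ {a}).mkQ hp
  have hg : Surjective g := surjective_of_surjective_comp_of_isSuperfluous_ker hsmall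
    (hpg ▸ (span Rᵐᵒᵖ {a}).mkQ_surjective)
  rcases subsingleton_or_injective_of_surjective hg with hP | hinj
  · exact .inl (isUnit_of_span_singleton_eq_top
      (Submodule.Quotient.subsingleton_iff.1 hp.subsingleton))
  · have hsup : (span Rᵐᵒᵖ {a}).IsSuperfluous := by
      rw [← ker_mkQ (span Rᵐᵒᵖ {a}), ← hpg, ker_comp]
      exact IsSuperfluous.comap_of_bijective hsmall ⟨hinj, hg⟩
    exact .inr (isUnit_of_span_singleton_eq_top
      (hsup _ (span_singleton_sup_span_singleton_eq_top hab)))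
end

section
/- Let M be a quasi-projective right R-module, E = End(M), s ∈ E, and e ∈ E an idempotent. Let π : M → M/s(M) and φ : E → E/sE be the canonical epimorphisms. Then ker(π|_{e(M)}) = e(M) ∩ s(M) is superfluous in e(M) if and only if ker(φ|_{eE}) = eE ∩ sE is superfluous in eE. -/
/-!
For quasi-projective `M`, an endomorphism `x` lies in the right ideal `aE` exactly when
`x(M) ⊆ a(M)`: quasi-projectivity lifts `x : M → a(M)` along the epimorphism `a : M → a(M)`.
Through this dictionary, a decomposition `e = x + l` with `x ∈ eE ∩ sE` and `l ∈ L ⊆ eE`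
gives `e(M) = (e(M) ∩ s(M)) + l(M)`, so smallness in `e(M)` yields `l(M) = e(M)`, i.e.
`e ∈ lE ⊆ L`. Conversely, if `(e(M) ∩ s(M)) + N = e(M)`, then `π ∘ e` factors through
`π ∘ s` for `π : M → M/N`, say as `π ∘ s ∘ k`; then `e = sk + (e - sk)` with
`(e - sk)(M) ⊆ N`, and smallness in `eE` forces `e ∈ (e - sk)E`, hence `e(M) ⊆ N`.
-/

open Submodule LinearMap Function

/-- `M` is quasi-projective: for every epimorphism `f : M → L` and homomorphism
`h : M → L` there is `k : M → M` with `f ∘ k = h`. -/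
def QuasiProjective (S : Type u) [Ring S] (M : Type v) [AddCommGroup M]
    [Module S M] : Prop :=
  ∀ (L : Type v) [AddCommGroup L] [Module S L] (f : M →ₗ[S] L),
    Function.Surjective f → ∀ h : M →ₗ[S] L, ∃ k : M →ₗ[S] M, f ∘ₗ k = h

def IsSuperfluousIn {α : Type*} [SemilatticeSup α] (k n : α) : Prop :=
  ∀ l ≤ n, k ⊔ l = n → l = n

namespace QuasiProjective

variable {S : Type*} [Ring S] {M : Type v} [AddCommGroup M] [Module S M]

theorem exists_comp_eq_of_range_le (hqp : QuasiProjective S M)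
    {N : Type v} [AddCommGroup N] [Module S N] {f g : M →ₗ[S] N} (h : range g ≤ range f) :
    ∃ k : M →ₗ[S] M, f ∘ₗ k = g := by
  obtain ⟨k, hk⟩ := hqp (range f) f.rangeRestrict f.surjective_rangeRestrict
    (g.codRestrict (range f) fun m => h ⟨m, rfl⟩)
  exact ⟨k, LinearMap.ext fun m => congrArg Subtype.val (LinearMap.congr_fun hk m)⟩

theorem mem_span_singleton_iff_range_le (hqp : QuasiProjective S M) {a x : Module.End S M} :
    x ∈ span (Module.End S M)ᵐᵒᵖ {a} ↔ range x ≤ range a := by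
  simp only [mem_span_singleton, MulOpposite.smul_eq_mul_unop, MulOpposite.exists,
    MulOpposite.unop_op, Module.End.mul_eq_comp]
  constructor
  · rintro ⟨k, rfl⟩
    exact range_comp_le_range k a
  · exact hqp.exists_comp_eq_of_range_le

theorem isSuperfluousIn_span_inf_of_range_inf (hqp : QuasiProjective S M)
    {s e : Module.End S M} (hsmall : IsSuperfluousIn (range e ⊓ range s) (range e)) :
    IsSuperfluousIn (span (Module.End S M)ᵐᵒᵖ {e} ⊓ span _ {s}) (span _ {e}) := by
  intro L hLe hsup
  obtain ⟨x, ⟨hxe, hxs⟩, l, hl, rfl⟩ := mem_sup.mp (hsup.ge (mem_span_singleton_self e))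
  have hl_le : range l ≤ range (x + l) := hqp.mem_span_singleton_iff_range_le.mp (hLe hl)
  have hrange : range (x + l) ⊓ range s ⊔ range l = range (x + l) := by
    refine le_antisymm (sup_le inf_le_left hl_le) ?_
    rintro _ ⟨m, rfl⟩
    exact add_mem_sup
      ⟨hqp.mem_span_singleton_iff_range_le.mp hxe ⟨m, rfl⟩,
        hqp.mem_span_singleton_iff_range_le.mp hxs ⟨m, rfl⟩⟩ ⟨m, rfl⟩
  have hmem : x + l ∈ span _ {l} :=
    hqp.mem_span_singleton_iff_range_le.mpr (hsmall _ hl_le hrange).ge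
  exact le_antisymm hLe <| (span_singleton_le_iff_mem _ _).mpr <|
    (span_singleton_le_iff_mem _ _).mpr hl hmem

theorem isSuperfluousIn_range_inf_of_span_inf (hqp : QuasiProjective S M)
    {s e : Module.End S M}
    (hsmall : IsSuperfluousIn (span (Module.End S M)ᵐᵒᵖ {e} ⊓ span _ {s}) (span _ {e})) :
    IsSuperfluousIn (range e ⊓ range s) (range e) := by
  intro N hNe hsup
  have hfactor : range (N.mkQ ∘ₗ e) ≤ range (N.mkQ ∘ₗ s) := by
    rw [range_comp, range_comp, ← hsup, Submodule.map_sup, mkQ_map_self, sup_bot_eq]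
    exact map_mono inf_le_right
  obtain ⟨k, hk⟩ := hqp.exists_comp_eq_of_range_le hfactor
  have hN : range (e - s * k) ≤ N := by
    rw [← N.ker_mkQ, range_le_ker_iff, comp_sub, Module.End.mul_eq_comp,
      ← LinearMap.comp_assoc, hk, sub_self]
  have hdiff : e - s * k ∈ span (Module.End S M)ᵐᵒᵖ {e} :=
    hqp.mem_span_singleton_iff_range_le.mpr (hN.trans hNe)
  have hsk_e : s * k ∈ span (Module.End S M)ᵐᵒᵖ {e} := by
    simpa using sub_mem (mem_span_singleton_self e) hdiff
  have hsk_s : s * k ∈ span (Module.End S M)ᵐᵒᵖ {s} :=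
    mem_span_singleton.mpr ⟨MulOpposite.op k, op_smul_eq_mul _ _⟩
  have hdiff_le : span (Module.End S M)ᵐᵒᵖ {e - s * k} ≤ span _ {e} :=
    (span_singleton_le_iff_mem _ _).mpr hdiff
  have hspan :
      span (Module.End S M)ᵐᵒᵖ {e} ⊓ span _ {s} ⊔ span _ {e - s * k} = span _ {e} := by
    refine le_antisymm (sup_le inf_le_left hdiff_le) ((span_singleton_le_iff_mem _ _).mpr ?_)
    have hsum : s * k + (e - s * k) ∈
        span (Module.End S M)ᵐᵒᵖ {e} ⊓ span _ {s} ⊔ span _ {e - s * k} :=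
      add_mem_sup ⟨hsk_e, hsk_s⟩ (mem_span_singleton_self _)
    rwa [add_sub_cancel] at hsum
  have he : e ∈ span (Module.End S M)ᵐᵒᵖ {e - s * k} :=
    (hsmall _ hdiff_le hspan).ge (mem_span_singleton_self e)
  exact le_antisymm hNe ((hqp.mem_span_singleton_iff_range_le.mp he).trans hN)

theorem isSuperfluousIn_range_inf_iff_span_inf (hqp : QuasiProjective S M)
    (s e : Module.End S M) :
    IsSuperfluousIn (range e ⊓ range s) (range e) ↔
      IsSuperfluousIn (span (Module.End S M)ᵐᵒᵖ {e} ⊓ span _ {s}) (span _ {e}) :=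
  ⟨hqp.isSuperfluousIn_span_inf_of_range_inf, hqp.isSuperfluousIn_range_inf_of_span_inf⟩

end QuasiProjective

theorem stmt_19_general {R : Type*} [Ring R]
    {M : Type v} [AddCommGroup M] [Module Rᵐᵒᵖ M]
    (hqp : QuasiProjective Rᵐᵒᵖ M)
    (s e : Module.End Rᵐᵒᵖ M) :
    (∀ L : Submodule Rᵐᵒᵖ M,
        L ≤ LinearMap.range (e : M →ₗ[Rᵐᵒᵖ] M) →
        (LinearMap.range (e : M →ₗ[Rᵐᵒᵖ] M) ⊓ LinearMap.range (s : M →ₗ[Rᵐᵒᵖ] M))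
            ⊔ L = LinearMap.range (e : M →ₗ[Rᵐᵒᵖ] M) →
        L = LinearMap.range (e : M →ₗ[Rᵐᵒᵖ] M)) ↔
    (∀ L : Submodule (Module.End Rᵐᵒᵖ M)ᵐᵒᵖ (Module.End Rᵐᵒᵖ M),
        L ≤ Submodule.span (Module.End Rᵐᵒᵖ M)ᵐᵒᵖ {e} →
        (Submodule.span (Module.End Rᵐᵒᵖ M)ᵐᵒᵖ {e}
            ⊓ Submodule.span (Module.End Rᵐᵒᵖ M)ᵐᵒᵖ {s}) ⊔ L
          = Submodule.span (Module.End Rᵐᵒᵖ M)ᵐᵒᵖ {e} →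
        L = Submodule.span (Module.End Rᵐᵒᵖ M)ᵐᵒᵖ {e}) :=
  hqp.isSuperfluousIn_range_inf_iff_span_inf s e

/-- For a quasi-projective right `R`-module `M` with `E = End(M)`, `s ∈ E` and an
idempotent `e ∈ E`: `ker(π|_{e(M)}) = e(M) ∩ s(M)` is superfluous in `e(M)` iff
`ker(φ|_{eE}) = eE ∩ sE` is superfluous in `eE`. -/
theorem stmt_19 {R : Type*} [Ring R]
    {M : Type v} [AddCommGroup M] [Module Rᵐᵒᵖ M]
    (hqp : QuasiProjective Rᵐᵒᵖ M)
    (s e : Module.End Rᵐᵒᵖ M) (he : IsIdempotentElem e) :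
    (∀ L : Submodule Rᵐᵒᵖ M,
        L ≤ LinearMap.range (e : M →ₗ[Rᵐᵒᵖ] M) →
        (LinearMap.range (e : M →ₗ[Rᵐᵒᵖ] M) ⊓ LinearMap.range (s : M →ₗ[Rᵐᵒᵖ] M))
            ⊔ L = LinearMap.range (e : M →ₗ[Rᵐᵒᵖ] M) →
        L = LinearMap.range (e : M →ₗ[Rᵐᵒᵖ] M)) ↔
    (∀ L : Submodule (Module.End Rᵐᵒᵖ M)ᵐᵒᵖ (Module.End Rᵐᵒᵖ M),
        L ≤ Submodule.span (Module.End Rᵐᵒᵖ M)ᵐᵒᵖ {e} →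
        (Submodule.span (Module.End Rᵐᵒᵖ M)ᵐᵒᵖ {e}
            ⊓ Submodule.span (Module.End Rᵐᵒᵖ M)ᵐᵒᵖ {s}) ⊔ L
          = Submodule.span (Module.End Rᵐᵒᵖ M)ᵐᵒᵖ {e} →
        L = Submodule.span (Module.End Rᵐᵒᵖ M)ᵐᵒᵖ {e}) :=
  stmt_19_general hqp s e
end
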